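/- arXiv:1706.02619 — 7 statements merged into one kernel-verified Lean document; each statement's English description precedes it below -/
import Mathlib

section
/- In a connected chordal bipartite graph G with bipartition classes A and B, if M is an induced subgraph on a set of vertices containing at least one vertex of each class such that M is connected and the vertex set of M dominates all of G, then for every edge e₀ = {v₀,h₀} of G (v₀ ∈ A, h₀ ∈ B) there exist an edge e of M such that either e ∩ e₀ ≠ ∅ or e ∪ e₀ induces a 4-cycle in G. -/
/-- Every cycle of length at least 6 has a chord. -/
def ChordCond {V : Type*} (G : SimpleGraph V) : Prop :=
  ∀ (v : V) (c : G.Walk v v), c.IsCycle → 6 ≤ c.length →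
    ∃ a b, a ∈ c.support ∧ b ∈ c.support ∧ G.Adj a b ∧ s(a, b) ∉ c.edges

/-- The four vertices `v₁,h₁,v₂,h₂` induce a 4-cycle. -/
def Induces4Cycle {V : Type*} (G : SimpleGraph V) (v₁ h₁ v₂ h₂ : V) : Prop :=
  v₁ ≠ v₂ ∧ h₁ ≠ h₂ ∧ G.Adj v₁ h₁ ∧ G.Adj v₁ h₂ ∧ G.Adj v₂ h₁ ∧ G.Adj v₂ h₂

/-- Two edges `{v₁,h₁}` and `{v₂,h₂}` of a bipartite graph have r-vision of each
other: they intersect, or their union induces a 4-cycle. -/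
def RVision {V : Type*} (G : SimpleGraph V) (v₁ h₁ v₂ h₂ : V) : Prop :=
  v₁ = v₂ ∨ h₁ = h₂ ∨ Induces4Cycle G v₁ h₁ v₂ h₂

/-!
If `v₀` or `h₀` lies in `M`, an edge of `M` at it meets `e₀`; such an edge exists because `M`
is connected and meets both classes. Otherwise domination gives paths inside `M` from a
neighbour of `v₀` to a neighbour of `h₀`; take a shortest one, of length `ℓ`. Closed up through
`h₀` and `v₀` it is a cycle of length `ℓ + 3`, and `ℓ` is odd by bipartiteness. If `ℓ ≥ 3`, a
chord of this cycle yields a shorter such path: a chord at `v₀` or at `h₀` cuts off an end of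
the path, and a chord between two path vertices is a shortcut. Hence `ℓ = 1`, and that edge of
`M` induces a 4-cycle with `e₀`.
-/

namespace SimpleGraph

variable {V : Type*} {G : SimpleGraph V}

namespace Walk

lemma even_length_iff_mem_iff {A : Set V} (hA : ∀ ⦃x y⦄, G.Adj x y → (x ∈ A ↔ y ∉ A))
    {u v : V} (p : G.Walk u v) : Even p.length ↔ (u ∈ A ↔ v ∈ A) := by
  induction p with
  | nil => simp
  | cons h q ih =>
    rw [length_cons, Nat.even_add_one, ih]
    have := hA h
    tauto

lemma two_le_length_of_adj_of_notMem_edges {u v : V} (p : G.Walk u v) (hadj : G.Adj u v)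
    (hp : s(u, v) ∉ p.edges) : 2 ≤ p.length := by
  rcases p with _ | ⟨_, _ | ⟨_, _⟩⟩
  · exact absurd rfl hadj.ne
  · simp at hp
  · simp

lemma exists_shorter_of_adj_start [DecidableEq V] {u m y : V} (d : G.Walk u y) (hm : m ∈ d.support)
    (hadj : G.Adj u m) (hd : s(u, m) ∉ d.edges) :
    ∃ q : G.Walk u y, q.length < d.length ∧ q.support ⊆ d.support := by
  have h2 := (d.takeUntil m hm).two_le_length_of_adj_of_notMem_edges hadj
    fun h ↦ hd (d.edges_takeUntil_subset_edges hm h)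
  refine ⟨cons hadj (d.dropUntil m hm), ?_, ?_⟩
  · have := congrArg length (d.take_spec hm)
    rw [length_append] at this
    rw [length_cons]
    omega
  · intro w hw
    rw [support_cons, List.mem_cons] at hw
    rcases hw with rfl | hw
    · exact d.start_mem_support
    · exact d.support_dropUntil_subset_support hm hw

lemma exists_shorter_of_chord [DecidableEq V] {x y u m : V} (p : G.Walk x y)
    (hu : u ∈ p.support) (hm : m ∈ p.support) (hadj : G.Adj u m) (hp : s(u, m) ∉ p.edges) :
    ∃ q : G.Walk x y, q.length < p.length ∧ q.support ⊆ p.support := by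
  obtain ⟨t, d, rfl⟩ := mem_support_iff_exists_append.mp hu
  rw [edges_append, List.mem_append, not_or] at hp
  rw [mem_support_append_iff] at hm
  rcases hm with hm | hm
  · obtain ⟨q, hlen, hsupp⟩ := t.reverse.exists_shorter_of_adj_start
      (by simpa using hm) hadj (by simpa using hp.1)
    refine ⟨q.reverse.append d, ?_, fun w hw ↦ ?_⟩
    · simpa only [length_reverse, length_append, add_lt_add_iff_right] using hlen
    · simp only [mem_support_append_iff, support_reverse, List.mem_reverse] at hw ⊢
      exact hw.imp_left fun hw ↦ by simpa using hsupp hw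
  · obtain ⟨q, hlen, hsupp⟩ := d.exists_shorter_of_adj_start hm hadj hp.2
    refine ⟨t.append q, ?_, fun w hw ↦ ?_⟩
    · simpa only [length_append, add_lt_add_iff_left] using hlen
    · simp only [mem_support_append_iff] at hw ⊢
      exact hw.imp_right fun hw ↦ hsupp hw

end Walk

structure IsLinkingPath (G : SimpleGraph V) (M : Set V) (v₀ h₀ : V) {x y : V} (p : G.Walk x y) :
    Prop where
  adj_start : G.Adj v₀ x
  adj_end : G.Adj y h₀
  isPath : p.IsPath
  support_subset : ∀ w ∈ p.support, w ∈ M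

namespace IsLinkingPath

variable {M : Set V} {v₀ h₀ x y : V} {p : G.Walk x y}

lemma induces4Cycle (hp : IsLinkingPath G M v₀ h₀ p) (h1 : p.length = 1) (he₀ : G.Adj v₀ h₀)
    (hv₀ : v₀ ∉ M) (hh₀ : h₀ ∉ M) : Induces4Cycle G y x v₀ h₀ := by
  have hx := hp.support_subset x p.start_mem_support
  have hy := hp.support_subset y p.end_mem_support
  exact ⟨by rintro rfl; exact hv₀ hy, by rintro rfl; exact hh₀ hx,
    (Walk.adj_of_length_eq_one h1).symm, hp.adj_end, hp.adj_start, he₀⟩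

lemma exists_shorter_of_adj_start [DecidableEq V] (hp : IsLinkingPath G M v₀ h₀ p) {m : V}
    (hm : m ∈ p.support) (hadj : G.Adj v₀ m) (hmx : m ≠ x) :
    ∃ q : G.Walk m y, IsLinkingPath G M v₀ h₀ q ∧ q.length < p.length :=
  ⟨p.dropUntil m hm, ⟨hadj, hp.adj_end, hp.isPath.dropUntil hm,
    fun _ hw ↦ hp.support_subset _ (p.support_dropUntil_subset_support hm hw)⟩,
    Walk.length_dropUntil_lt_length hm hmx⟩

lemma exists_shorter_of_adj_end [DecidableEq V] (hp : IsLinkingPath G M v₀ h₀ p) {m : V}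
    (hm : m ∈ p.support) (hadj : G.Adj m h₀) (hmy : m ≠ y) :
    ∃ q : G.Walk x m, IsLinkingPath G M v₀ h₀ q ∧ q.length < p.length :=
  ⟨p.takeUntil m hm, ⟨hp.adj_start, hadj, hp.isPath.takeUntil hm,
    fun _ hw ↦ hp.support_subset _ (p.support_takeUntil_subset_support hm hw)⟩,
    Walk.length_takeUntil_lt_length hm hmy⟩

lemma exists_shorter_of_chord [DecidableEq V] (hp : IsLinkingPath G M v₀ h₀ p) {u m : V}
    (hu : u ∈ p.support) (hm : m ∈ p.support) (hadj : G.Adj u m) (hum : s(u, m) ∉ p.edges) :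
    ∃ q : G.Walk x y, IsLinkingPath G M v₀ h₀ q ∧ q.length < p.length := by
  obtain ⟨q, hlen, hsupp⟩ := p.exists_shorter_of_chord hu hm hadj hum
  exact ⟨q.bypass, ⟨hp.adj_start, hp.adj_end, q.bypass_isPath,
    fun _ hw ↦ hp.support_subset _ (hsupp (q.support_bypass_subset_support hw))⟩,
    q.length_bypass_le_length.trans_lt hlen⟩

lemma isCycle (hp : IsLinkingPath G M v₀ h₀ p) (he₀ : G.Adj v₀ h₀) (hv₀ : v₀ ∉ M)
    (hh₀ : h₀ ∉ M) :
    (Walk.cons he₀.symm (Walk.cons hp.adj_start (p.concat hp.adj_end))).IsCycle := by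
  have hx := hp.support_subset x p.start_mem_support
  have hy := hp.support_subset y p.end_mem_support
  have hv₀p : v₀ ∉ p.support := fun h ↦ hv₀ (hp.support_subset _ h)
  have hh₀p : h₀ ∉ p.support := fun h ↦ hh₀ (hp.support_subset _ h)
  rw [Walk.cons_isCycle_iff, Walk.cons_isPath_iff]
  refine ⟨⟨hp.isPath.concat hh₀p hp.adj_end, ?_⟩, ?_⟩
  · simpa [he₀.ne] using hv₀p
  · simp only [Walk.edges_cons, Walk.edges_concat, Sym2.eq_swap, List.concat_eq_append,
      List.mem_cons, Sym2.eq, Sym2.rel_iff', Prod.mk.injEq, true_and, Prod.swap_prod_mk, he₀.ne',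
      and_false, or_false, List.mem_append, and_true, List.not_mem_nil, not_or, not_and]
    exact ⟨fun h ↦ hh₀ (h ▸ hx), fun h ↦ hv₀p (p.fst_mem_support_of_mem_edges h),
      fun h ↦ absurd h he₀.ne, fun h ↦ hv₀ (h ▸ hy)⟩

lemma exists_shorter [DecidableEq V] (hchord : ChordCond G) (hp : IsLinkingPath G M v₀ h₀ p)
    (he₀ : G.Adj v₀ h₀) (hv₀ : v₀ ∉ M) (hh₀ : h₀ ∉ M) (h3 : 3 ≤ p.length) :
    ∃ (x' y' : V) (q : G.Walk x' y'), IsLinkingPath G M v₀ h₀ q ∧ q.length < p.length := by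
  set c := Walk.cons he₀.symm (Walk.cons hp.adj_start (p.concat hp.adj_end))
  have hlen : 6 ≤ c.length := by
    simp only [c, Walk.length_cons, Walk.length_concat]
    omega
  obtain ⟨a, b, ha, hb, hab, habc⟩ := hchord h₀ c (hp.isCycle he₀ hv₀ hh₀) hlen
  have hsupp : ∀ w ∈ c.support, w = h₀ ∨ w = v₀ ∨ w ∈ p.support := by
    intro w hw
    simp only [c, Walk.support_cons, Walk.support_concat, List.mem_cons, List.mem_append,
      List.not_mem_nil, or_false] at hw
    tauto
  have hedges : s(h₀, v₀) ∈ c.edges ∧ s(v₀, x) ∈ c.edges ∧ s(y, h₀) ∈ c.edges := by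
    simp [c]
  have hpedges : p.edges ⊆ c.edges := fun e he ↦ by simp [c, he]
  have key : ∀ u w, G.Adj u w → s(u, w) ∉ c.edges → u ∈ p.support → w ∈ c.support →
      ∃ (x' y' : V) (q : G.Walk x' y'), IsLinkingPath G M v₀ h₀ q ∧ q.length < p.length := by
    intro u w huw hc hu hw
    rcases hsupp w hw with rfl | rfl | hw
    · exact ⟨_, _, hp.exists_shorter_of_adj_end hu huw (by rintro rfl; exact hc hedges.2.2)⟩
    · exact ⟨_, _, hp.exists_shorter_of_adj_start hu huw.symm
        (by rintro rfl; exact hc (Sym2.eq_swap ▸ hedges.2.1))⟩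
    · exact ⟨_, _, hp.exists_shorter_of_chord hu hw huw fun h ↦ hc (hpedges h)⟩
  by_cases ha' : a ∈ p.support
  · exact key a b hab habc ha' hb
  by_cases hb' : b ∈ p.support
  · exact key b a hab.symm (Sym2.eq_swap ▸ habc) hb' ha
  have hab' : s(a, b) = s(h₀, v₀) := by
    rcases hsupp a ha with rfl | rfl | ha <;> rcases hsupp b hb with rfl | rfl | hb <;> simp_all
  exact (habc (hab' ▸ hedges.1)).elim

lemma exists_induces4Cycle [DecidableEq V] (hchord : ChordCond G) {A : Set V}
    (hA : ∀ ⦃x y⦄, G.Adj x y → (x ∈ A ↔ y ∉ A)) (hv₀A : v₀ ∈ A) (he₀ : G.Adj v₀ h₀)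
    (hv₀ : v₀ ∉ M) (hh₀ : h₀ ∉ M) (hp : IsLinkingPath G M v₀ h₀ p) :
    ∃ v ∈ M, ∃ h ∈ M, Induces4Cycle G v h v₀ h₀ := by
  induction hn : p.length using Nat.strong_induction_on generalizing x y with
  | _ n ih =>
    have hodd : Odd p.length := by
      rw [← Nat.not_even_iff_odd, Walk.even_length_iff_mem_iff hA]
      have := hA hp.adj_start
      have := hA hp.adj_end
      have := hA he₀
      tauto
    obtain h1 | h3 : p.length = 1 ∨ 3 ≤ p.length := by
      obtain ⟨k, hk⟩ := hodd
      omega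
    · exact ⟨y, hp.support_subset y p.end_mem_support, x, hp.support_subset x p.start_mem_support,
        hp.induces4Cycle h1 he₀ hv₀ hh₀⟩
    · obtain ⟨x', y', q, hq, hlen⟩ := hp.exists_shorter hchord he₀ hv₀ hh₀ h3
      exact ih _ (hn ▸ hlen) hq rfl

end IsLinkingPath

lemma exists_adj_mem_of_induce_preconnected {M : Set V} (hM : (G.induce M).Preconnected)
    {v z : V} (hv : v ∈ M) (hz : z ∈ M) (hne : v ≠ z) : ∃ u ∈ M, G.Adj v u := by
  have : Nontrivial M := ⟨⟨v, hv⟩, ⟨z, hz⟩, fun h ↦ hne (congrArg Subtype.val h)⟩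
  obtain ⟨u, hu⟩ := hM.exists_adj_of_nontrivial ⟨v, hv⟩
  exact ⟨u, u.2, hu⟩

lemma exists_isPath_of_induce_preconnected [DecidableEq V] {M : Set V}
    (hM : (G.induce M).Preconnected) {x y : V} (hx : x ∈ M) (hy : y ∈ M) :
    ∃ p : G.Walk x y, p.IsPath ∧ ∀ w ∈ p.support, w ∈ M := by
  obtain ⟨w⟩ := hM ⟨x, hx⟩ ⟨y, hy⟩
  let q := w.map (Embedding.induce M).toHom
  have hq : ∀ u ∈ q.support, u ∈ M := by
    intro u hu
    rw [Walk.support_map, List.mem_map] at hu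
    obtain ⟨u', -, rfl⟩ := hu
    exact u'.2
  exact ⟨q.bypass, q.bypass_isPath, fun u hu ↦ hq u (q.support_bypass_subset_support hu)⟩

end SimpleGraph

open SimpleGraph

theorem connected_dominating_induced_subgraph_rvision_general {V : Type*} (G : SimpleGraph V)
    (A B : Set V)
    (hpart : ∀ v, (v ∈ A ∧ v ∉ B) ∨ (v ∈ B ∧ v ∉ A))
    (hbip : ∀ x y, G.Adj x y → (x ∈ A ∧ y ∈ B) ∨ (x ∈ B ∧ y ∈ A))
    (hchord : ChordCond G)
    (M : Set V) (hMA : (M ∩ A).Nonempty) (hMB : (M ∩ B).Nonempty)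
    (hMconn : (G.induce M).Connected)
    (hdom : ∀ v : V, v ∈ M ∨ ∃ u ∈ M, G.Adj u v)
    (v₀ h₀ : V) (hv₀ : v₀ ∈ A) (hh₀ : h₀ ∈ B) (he₀ : G.Adj v₀ h₀) :
    ∃ v h, v ∈ M ∧ h ∈ M ∧ v ∈ A ∧ h ∈ B ∧ G.Adj v h ∧ RVision G v h v₀ h₀ := by
  classical
  have hB : ∀ v, v ∈ B ↔ v ∉ A := fun v ↦ by have := hpart v; tauto
  have hA : ∀ ⦃x y⦄, G.Adj x y → (x ∈ A ↔ y ∉ A) := fun x y hxy ↦ by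
    have := hbip x y hxy; have := hB x; have := hB y; tauto
  by_cases hv₀M : v₀ ∈ M
  · obtain ⟨z, hzM, hzB⟩ := hMB
    obtain ⟨h, hhM, hadj⟩ := exists_adj_mem_of_induce_preconnected hMconn.preconnected hv₀M hzM
      (by rintro rfl; exact (hB v₀).1 hzB hv₀)
    exact ⟨v₀, h, hv₀M, hhM, hv₀, (hB h).2 ((hA hadj).1 hv₀), hadj, Or.inl rfl⟩
  by_cases hh₀M : h₀ ∈ M
  · obtain ⟨z, hzM, hzA⟩ := hMA
    obtain ⟨v, hvM, hadj⟩ := exists_adj_mem_of_induce_preconnected hMconn.preconnected hh₀M hzM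
      (by rintro rfl; exact (hB h₀).1 hh₀ hzA)
    exact ⟨v, h₀, hvM, hh₀M, (hA hadj.symm).2 ((hB h₀).1 hh₀), hh₀, hadj.symm, Or.inr (Or.inl rfl)⟩
  obtain ⟨x, hxM, hx⟩ := (hdom v₀).resolve_left hv₀M
  obtain ⟨y, hyM, hy⟩ := (hdom h₀).resolve_left hh₀M
  obtain ⟨p, hpath, hpM⟩ := exists_isPath_of_induce_preconnected hMconn.preconnected hxM hyM
  obtain ⟨v, hvM, h, hhM, hcyc⟩ := IsLinkingPath.exists_induces4Cycle hchord hA hv₀ he₀ hv₀M hh₀M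
    ⟨hx.symm, hy, hpath, hpM⟩
  exact ⟨v, h, hvM, hhM, (hA hcyc.2.2.2.1).2 ((hB h₀).1 hh₀), (hB h).2 ((hA hcyc.2.2.2.2.1).1 hv₀),
    hcyc.2.2.1, Or.inr (Or.inr hcyc)⟩

/-- In a connected chordal bipartite graph, if the vertex set `M` (meeting both
classes) induces a connected subgraph and dominates `G`, then every edge of `G`
is r-visible from some edge of the induced subgraph on `M`. -/
theorem connected_dominating_induced_subgraph_rvision {V : Type*} (G : SimpleGraph V)
    (A B : Set V)
    (hpart : ∀ v, (v ∈ A ∧ v ∉ B) ∨ (v ∈ B ∧ v ∉ A))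
    (hbip : ∀ x y, G.Adj x y → (x ∈ A ∧ y ∈ B) ∨ (x ∈ B ∧ y ∈ A))
    (hconn : G.Connected) (hchord : ChordCond G)
    (M : Set V) (hMA : (M ∩ A).Nonempty) (hMB : (M ∩ B).Nonempty)
    (hMconn : (G.induce M).Connected)
    (hdom : ∀ v : V, v ∈ M ∨ ∃ u ∈ M, G.Adj u v)
    (v₀ h₀ : V) (hv₀ : v₀ ∈ A) (hh₀ : h₀ ∈ B) (he₀ : G.Adj v₀ h₀) :
    ∃ v h, v ∈ M ∧ h ∈ M ∧ v ∈ A ∧ h ∈ B ∧ G.Adj v h ∧ RVision G v h v₀ h₀ :=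
  connected_dominating_induced_subgraph_rvision_general G A B hpart hbip hchord M hMA hMB hMconn
    hdom v₀ h₀ hv₀ hh₀ he₀
end

section
/- Let T be a finite tree and let F be a finite family of subtrees of T (nonempty connected subgraphs). Then the maximum number of pairwise vertex-disjoint subtrees in F equals the minimum number of vertices of T needed to intersect every member of F. -/
/-!
Root the tree at a vertex `r` and call the point of a subtree nearest to `r` its gate; the path
from `r` to any point of the subtree passes through the gate. Take the member whose gate `v` is
deepest: every member meeting it has a gate no deeper, hence contains `v`. So `v` hits the member
and all members it meets; keep the member, put `v` in the hitting set, discard every member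
through `v`, and repeat. This yields a disjoint subfamily and a hitting set of the same size,
while any hitting set needs a separate point for each member of a disjoint subfamily.
-/

namespace SimpleGraph

variable {V : Type*} {G : SimpleGraph V}

lemma Walk.IsPath.append {u v w : V} {p : G.Walk u v} {q : G.Walk v w}
    (hp : p.IsPath) (hq : q.IsPath) (h : ∀ x ∈ p.support, x ∈ q.support → x = v) :
    (p.append q).IsPath := by
  rw [Walk.isPath_def, Walk.support_append, List.nodup_append]
  have hq' := hq.support_nodup
  rw [← Walk.cons_tail_support, List.nodup_cons] at hq'
  refine ⟨hp.support_nodup, hq'.2, fun x hx y hy hxy => ?_⟩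
  subst hxy
  exact hq'.1 (h x hx (List.mem_of_mem_tail hy) ▸ hy)

namespace IsAcyclic

variable (hG : G.IsAcyclic)
include hG

lemma eq_of_isPath {u v : V} {p q : G.Walk u v} (hp : p.IsPath) (hq : q.IsPath) : p = q :=
  congrArg Subtype.val ((hG.subsingleton_path u v).elim ⟨p, hp⟩ ⟨q, hq⟩)

lemma length_eq_dist_of_isPath {u v : V} {p : G.Walk u v} (hp : p.IsPath) :
    p.length = G.dist u v := by
  obtain ⟨q, hq, hlen⟩ := p.reachable.exists_path_of_dist
  rw [hG.eq_of_isPath hp hq, hlen]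

lemma dist_add_dist_of_mem_support {u v w : V} {p : G.Walk u v} (hp : p.IsPath)
    (hw : w ∈ p.support) : G.dist u w + G.dist w v = G.dist u v := by
  classical
  rw [← hG.length_eq_dist_of_isPath (hp.takeUntil hw),
    ← hG.length_eq_dist_of_isPath (hp.dropUntil hw), ← hG.length_eq_dist_of_isPath hp,
    ← Walk.length_append, Walk.take_spec]

lemma mem_of_mem_support_of_preconnected_induce {s : Set V} (hs : (G.induce s).Preconnected)
    {u v : V} (hu : u ∈ s) (hv : v ∈ s) {p : G.Walk u v} (hp : p.IsPath) :
    ∀ x ∈ p.support, x ∈ s := by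
  classical
  obtain ⟨q⟩ := hs ⟨u, hu⟩ ⟨v, hv⟩
  have hpq : p = q.bypass.map (Embedding.induce (G := G) s).toHom :=
    hG.eq_of_isPath hp (q.bypass_isPath.map (Embedding.induce (G := G) s).injective)
  intro x hx
  rw [hpq] at hx
  obtain ⟨y, -, rfl⟩ := List.mem_map.mp ((Walk.support_map _ _).symm ▸ hx)
  exact y.2

end IsAcyclic

namespace IsTree

variable (hG : G.IsTree)
include hG

/-- The paths `r ⟶ v` and `v ⟶ w` meet only at `v`, so together they form the path `r ⟶ w`. -/
lemma mem_support_of_dist_le {s : Set V} (hs : (G.induce s).Preconnected) {r v : V}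
    (hv : v ∈ s) (hmin : ∀ u ∈ s, G.dist r v ≤ G.dist r u) {w : V} (hw : w ∈ s)
    {p : G.Walk r w} (hp : p.IsPath) : v ∈ p.support := by
  obtain ⟨P, hP, -⟩ := hG.connected.exists_path_of_dist r v
  obtain ⟨Q, hQ, -⟩ := hG.connected.exists_path_of_dist v w
  have hPQ : (P.append Q).IsPath := by
    refine hP.append hQ fun x hxP hxQ => ?_
    have hxs := hG.isAcyclic.mem_of_mem_support_of_preconnected_induce hs hv hw hQ x hxQ
    have hrx := hG.isAcyclic.dist_add_dist_of_mem_support hP hxP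
    have hvx := hmin x hxs
    exact hG.connected.dist_eq_zero_iff.mp (by omega)
  rw [hG.isAcyclic.eq_of_isPath hp hPQ, Walk.mem_support_append_iff]
  exact Or.inl P.end_mem_support

/-- Both `v` and `y` lie on the path from `r` to a common point `w`, with `y` first, and the part
of that path from `y` to `w` stays in `t`. -/
lemma mem_of_not_disjoint_of_dist_le {s t : Set V} (hs : (G.induce s).Preconnected)
    (ht : (G.induce t).Preconnected) {r v y : V}
    (hv : v ∈ s) (hvmin : ∀ u ∈ s, G.dist r v ≤ G.dist r u)
    (hy : y ∈ t) (hymin : ∀ u ∈ t, G.dist r y ≤ G.dist r u)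
    (hyv : G.dist r y ≤ G.dist r v) (hst : ¬Disjoint s t) : v ∈ t := by
  classical
  obtain ⟨w, hws, hwt⟩ := Set.not_disjoint_iff.mp hst
  obtain ⟨p, hp, -⟩ := hG.connected.exists_path_of_dist r w
  have hvp := hG.mem_support_of_dist_le hs hv hvmin hws hp
  have hyp := hG.mem_support_of_dist_le ht hy hymin hwt hp
  rw [← p.take_spec hyp, Walk.mem_support_append_iff] at hvp
  rcases hvp with hv_before | hv_after
  · have hrv := hG.isAcyclic.dist_add_dist_of_mem_support (hp.takeUntil hyp) hv_before
    rwa [hG.connected.dist_eq_zero_iff.mp (by omega : G.dist v y = 0)]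
  · exact hG.isAcyclic.mem_of_mem_support_of_preconnected_induce ht hy hwt (hp.dropUntil hyp)
      v hv_after

lemma exists_mem_forall_not_disjoint_imp_mem {ι : Type*} {F : ι → Set V}
    (hF : ∀ i, (G.induce (F i)).Connected) {A : Finset ι} (hA : A.Nonempty) :
    ∃ i ∈ A, ∃ v ∈ F i, ∀ j ∈ A, ¬Disjoint (F i) (F j) → v ∈ F j := by
  obtain ⟨r⟩ := hG.connected.nonempty
  have hne (i : ι) : (F i).Nonempty := Set.nonempty_coe_sort.mp (hF i).nonempty
  let gate (i : ι) : V := Function.argminOn (G.dist r) (F i) (hne i)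
  have gate_mem (i : ι) : gate i ∈ F i := Function.argminOn_mem _ _ _
  have gate_le (i : ι) : ∀ u ∈ F i, G.dist r (gate i) ≤ G.dist r u :=
    fun _ hu => Function.argminOn_le _ _ hu
  obtain ⟨i, hi, hmax⟩ := A.exists_max_image (fun j => G.dist r (gate j)) hA
  refine ⟨i, hi, gate i, gate_mem i, fun j hj hij => ?_⟩
  exact hG.mem_of_not_disjoint_of_dist_le (hF i).preconnected (hF j).preconnected
    (gate_mem i) (gate_le i) (gate_mem j) (gate_le j) (hmax j hj) hij

end IsTree

end SimpleGraph

section HittingSet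

variable {V ι : Type*} (F : ι → Set V)

lemma card_le_card_of_pairwiseDisjoint {s : Finset ι} (hs : (s : Set ι).PairwiseDisjoint F)
    {C : Finset V} (hC : ∀ i ∈ s, ∃ v ∈ C, v ∈ F i) : s.card ≤ C.card :=
  Finset.card_le_card_of_forall_subsingleton (fun i v => v ∈ F i) hC
    fun _ _ _ ⟨hi, hvi⟩ _ ⟨hj, hvj⟩ => hs.elim hi hj (Set.not_disjoint_iff.mpr ⟨_, hvi, hvj⟩)

lemma exists_pairwiseDisjoint_card_hittingSet_le
    (hF : ∀ A : Finset ι, A.Nonempty →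
      ∃ i ∈ A, ∃ v ∈ F i, ∀ j ∈ A, ¬Disjoint (F i) (F j) → v ∈ F j)
    (A : Finset ι) :
    ∃ s ⊆ A, (s : Set ι).PairwiseDisjoint F ∧
      ∃ C : Finset V, C.card ≤ s.card ∧ ∀ i ∈ A, ∃ v ∈ C, v ∈ F i := by
  classical
  induction A using Finset.strongInduction with
  | H A ih =>
  obtain rfl | hA := A.eq_empty_or_nonempty
  · exact ⟨∅, subset_rfl, by simp, ∅, le_rfl, by simp⟩
  obtain ⟨i, hi, v, hvi, hv⟩ := hF A hA
  obtain ⟨s, hsA, hs, C, hCs, hC⟩ :=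
    ih (A.filter (v ∉ F ·)) (Finset.filter_ssubset.mpr ⟨i, hi, not_not.mpr hvi⟩)
  have hvs : ∀ j ∈ s, v ∉ F j := fun j hj => (Finset.mem_filter.mp (hsA hj)).2
  have hsA' : s ⊆ A := hsA.trans (Finset.filter_subset _ _)
  refine ⟨insert i s, Finset.insert_subset hi hsA', ?_, insert v C, ?_, fun j hj => ?_⟩
  · rw [Finset.coe_insert]
    exact hs.insert fun j hj _ => by_contra fun hij => hvs j hj (hv j (hsA' hj) hij)
  · calc (insert v C).card ≤ C.card + 1 := Finset.card_insert_le _ _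
      _ ≤ s.card + 1 := by omega
      _ = (insert i s).card := (Finset.card_insert_of_notMem fun h => hvs i h hvi).symm
  · by_cases hvj : v ∈ F j
    · exact ⟨v, Finset.mem_insert_self _ _, hvj⟩
    · obtain ⟨u, huC, huF⟩ := hC j (Finset.mem_filter.mpr ⟨hj, hvj⟩)
      exact ⟨u, Finset.mem_insert_of_mem huC, huF⟩

end HittingSet

lemma csSup_eq_csInf_of_forall_le {α : Type*} [ConditionallyCompleteLattice α] {M K : Set α}
    (h : ∀ m ∈ M, ∀ k ∈ K, m ≤ k) {m k : α} (hm : m ∈ M) (hk : k ∈ K) (hkm : k ≤ m) :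
    sSup M = sInf K :=
  le_antisymm (csSup_le ⟨m, hm⟩ fun m' hm' => le_csInf ⟨k, hk⟩ (h m' hm'))
    ((csInf_le ⟨m, h m hm⟩ hk).trans
      (hkm.trans (le_csSup ⟨k, fun m' hm' => h m' hm' k hk⟩ hm)))

theorem dirac_subtrees_nu_eq_tau_general {V : Type*}
    (T : SimpleGraph V) (hT : T.IsTree)
    {ι : Type*} [Fintype ι] (F : ι → Set V)
    (hF : ∀ i, (T.induce (F i)).Connected) :
    sSup {n : ℕ | ∃ s : Finset ι, s.card = n ∧
        (s : Set ι).Pairwise fun i j => Disjoint (F i) (F j)}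
      = sInf {n : ℕ | ∃ C : Finset V, C.card = n ∧ ∀ i, ∃ v ∈ C, v ∈ F i} := by
  obtain ⟨s, -, hs, C, hCs, hC⟩ := exists_pairwiseDisjoint_card_hittingSet_le F
    (fun _ => hT.exists_mem_forall_not_disjoint_imp_mem hF) Finset.univ
  refine csSup_eq_csInf_of_forall_le ?_ ⟨s, rfl, hs⟩
    ⟨C, rfl, fun i => hC i (Finset.mem_univ i)⟩ hCs
  rintro _ ⟨s', rfl, hs'⟩ _ ⟨C', rfl, hC'⟩
  exact card_le_card_of_pairwiseDisjoint F hs' fun i _ => hC' i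

/-- Dirac's theorem on subtrees of a tree: the maximum number of pairwise
vertex-disjoint members of a family of subtrees equals the minimum number of
vertices meeting every member. -/
theorem dirac_subtrees_nu_eq_tau {V : Type*} [Fintype V] [DecidableEq V]
    (T : SimpleGraph V) (hT : T.IsTree)
    {ι : Type*} [Fintype ι] (F : ι → Set V)
    (hF : ∀ i, (T.induce (F i)).Connected) :
    sSup {n : ℕ | ∃ s : Finset ι, s.card = n ∧
        (s : Set ι).Pairwise fun i j => Disjoint (F i) (F j)}
      = sInf {n : ℕ | ∃ C : Finset V, C.card = n ∧ ∀ i, ∃ v ∈ C, v ∈ F i} :=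
  dirac_subtrees_nu_eq_tau_general T hT F hF
end

section
/- In a connected bipartite graph G with parts S_V and S_H, suppose M_V ⊆ S_V dominates S_H and M_H ⊆ S_H dominates S_V, and suppose the induced subgraph G[M_V ∪ M_H] is a star (a tree with at most one vertex of degree greater than 1). Let Z be the set of edges of G induced by M_V ∪ M_H. Then |Z| = |M_V| + |M_H| − 1, and for every edge e₀ of G there is an edge e ∈ Z such that e ∩ e₀ ≠ ∅ or e ∪ e₀ induces a 4-cycle in G. -/
/-- If the induced subgraph on `M_V ∪ M_H` is a star with center `c` (every edge
inside `M_V ∪ M_H` is incident to `c`, and `c` is adjacent to all other members),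
then the edge set `Z` induced by `M_V ∪ M_H` has `|M_V| + |M_H| − 1` elements
and every edge of `G` is r-visible from some edge of `Z`. -/
theorem star_induced_edges_rcover {V : Type*} [Fintype V] [DecidableEq V]
    (G : SimpleGraph V) (SV SH : Set V)
    (hpart : ∀ v, (v ∈ SV ∧ v ∉ SH) ∨ (v ∈ SH ∧ v ∉ SV))
    (hbip : ∀ x y, G.Adj x y → (x ∈ SV ∧ y ∈ SH) ∨ (x ∈ SH ∧ y ∈ SV))
    (hconn : G.Connected)
    (MV MH : Set V) (hMV : MV ⊆ SV) (hMH : MH ⊆ SH)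
    (hdomH : ∀ h ∈ SH, ∃ v ∈ MV, G.Adj v h)
    (hdomV : ∀ v ∈ SV, ∃ h ∈ MH, G.Adj h v)
    (c : V) (hc : c ∈ MV ∪ MH)
    (hstar₁ : ∀ x y, x ∈ MV ∪ MH → y ∈ MV ∪ MH → G.Adj x y → x = c ∨ y = c)
    (hstar₂ : ∀ x ∈ MV ∪ MH, x ≠ c → G.Adj c x) :
    {e : Sym2 V | e ∈ G.edgeSet ∧ ∀ x ∈ e, x ∈ MV ∪ MH}.ncard
        = MV.ncard + MH.ncard - 1 ∧
    ∀ v₀ h₀, v₀ ∈ SV → h₀ ∈ SH → G.Adj v₀ h₀ →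
      ∃ v h, v ∈ MV ∧ h ∈ MH ∧ G.Adj v h ∧ RVision G v h v₀ h₀ := by
  have hVH : ∀ x, x ∈ SV → x ∈ SH → False := by
    intro x h1 h2
    rcases hpart x with ⟨_, h⟩ | ⟨_, h⟩
    · exact h h2
    · exact h h1
  rcases hc with hcV | hcH
  · -- c ∈ MV, so MV = {c}
    have hcSV : c ∈ SV := hMV hcV
    have hMVeq : MV = {c} := by
      ext x
      simp only [Set.mem_singleton_iff]
      constructor
      · intro hx
        by_contra hne
        have hadj := hstar₂ x (Or.inl hx) hne
        rcases hbip c x hadj with ⟨_, hxSH⟩ | ⟨hcSH, _⟩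
        · exact absurd hxSH (fun h => hVH x (hMV hx) h)
        · exact absurd hcSH (fun h => hVH c hcSV h)
      · rintro rfl; exact hcV
    have hcne : ∀ h ∈ MH, h ≠ c := by
      intro h hh heq
      exact hVH c hcSV (heq ▸ hMH hh)
    have hadjc : ∀ h ∈ MH, G.Adj c h := fun h hh => hstar₂ h (Or.inr hh) (hcne h hh)
    have hZ : {e : Sym2 V | e ∈ G.edgeSet ∧ ∀ x ∈ e, x ∈ MV ∪ MH}
        = (fun h => s(c, h)) '' MH := by
      ext e
      simp only [Set.mem_setOf_eq, Set.mem_image]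
      constructor
      · rintro ⟨hedge, hmem⟩
        obtain ⟨x, y, rfl⟩ : ∃ x y, e = s(x, y) := by
          induction e using Sym2.ind with
          | _ x y => exact ⟨x, y, rfl⟩
        rw [SimpleGraph.mem_edgeSet] at hedge
        have hx := hmem x (Sym2.mem_mk_left x y)
        have hy := hmem y (Sym2.mem_mk_right x y)
        rw [hMVeq] at hx hy
        rcases hx with hx | hx
        · rcases hy with hy | hy
          · exact absurd hedge (by rw [hx, hy]; exact G.irrefl)
          · exact ⟨y, hy, by rw [hx]⟩
        · rcases hy with hy | hy
          · exact ⟨x, hx, by rw [hy, Sym2.eq_swap]⟩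
          · exfalso
            rcases hbip x y hedge with ⟨hxV, _⟩ | ⟨_, hyV⟩
            · exact hVH x hxV (hMH hx)
            · exact hVH y hyV (hMH hy)
      · rintro ⟨h, hh, rfl⟩
        refine ⟨(hadjc h hh), ?_⟩
        intro z hz
        rw [Sym2.mem_iff] at hz
        rcases hz with rfl | rfl
        · exact Or.inl hcV
        · exact Or.inr hh
    constructor
    · have hinj : Function.Injective (fun h : V => s(c, h)) := fun a b hab =>
        Sym2.congr_right.mp hab
      rw [hZ, Set.ncard_image_of_injective _ hinj, hMVeq, Set.ncard_singleton]
      omega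
    · intro v₀ h₀ hv₀ hh₀ hadj₀
      obtain ⟨v, hvMV, hadjv⟩ := hdomH h₀ hh₀
      have hvc : v = c := by rw [hMVeq] at hvMV; exact hvMV
      obtain ⟨h, hhMH, hadjh⟩ := hdomV v₀ hv₀
      refine ⟨c, h, hcV, hhMH, hadjc h hhMH, ?_⟩
      by_cases h1 : c = v₀
      · exact Or.inl h1
      by_cases h2 : h = h₀
      · exact Or.inr (Or.inl h2)
      exact Or.inr (Or.inr ⟨h1, h2, hadjc h hhMH, hvc ▸ hadjv, hadjh.symm, hadj₀⟩)
  · -- c ∈ MH, so MH = {c}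
    have hcSH : c ∈ SH := hMH hcH
    have hMHeq : MH = {c} := by
      ext x
      simp only [Set.mem_singleton_iff]
      constructor
      · intro hx
        by_contra hne
        have hadj := hstar₂ x (Or.inr hx) hne
        rcases hbip c x hadj with ⟨hcSV, _⟩ | ⟨_, hxSV⟩
        · exact absurd hcSV (fun h => hVH c h hcSH)
        · exact absurd hxSV (fun h => hVH x h (hMH hx))
      · rintro rfl; exact hcH
    have hcne : ∀ v ∈ MV, v ≠ c := by
      intro v hv heq
      exact hVH c (heq ▸ hMV hv) hcSH
    have hadjc : ∀ v ∈ MV, G.Adj v c :=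
      fun v hv => (hstar₂ v (Or.inl hv) (hcne v hv)).symm
    have hZ : {e : Sym2 V | e ∈ G.edgeSet ∧ ∀ x ∈ e, x ∈ MV ∪ MH}
        = (fun v => s(v, c)) '' MV := by
      ext e
      simp only [Set.mem_setOf_eq, Set.mem_image]
      constructor
      · rintro ⟨hedge, hmem⟩
        obtain ⟨x, y, rfl⟩ : ∃ x y, e = s(x, y) := by
          induction e using Sym2.ind with
          | _ x y => exact ⟨x, y, rfl⟩
        rw [SimpleGraph.mem_edgeSet] at hedge
        have hx := hmem x (Sym2.mem_mk_left x y)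
        have hy := hmem y (Sym2.mem_mk_right x y)
        rw [hMHeq] at hx hy
        rcases hx with hx | hx
        · rcases hy with hy | hy
          · exfalso
            rcases hbip x y hedge with ⟨_, hySH⟩ | ⟨hxSH, _⟩
            · exact hVH y (hMV hy) hySH
            · exact hVH x (hMV hx) hxSH
          · exact ⟨x, hx, by rw [hy]⟩
        · rcases hy with hy | hy
          · exact ⟨y, hy, by rw [hx, Sym2.eq_swap]⟩
          · exact absurd hedge (by rw [hx, hy]; exact G.irrefl)
      · rintro ⟨v, hv, rfl⟩
        refine ⟨(hadjc v hv), ?_⟩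
        intro z hz
        rw [Sym2.mem_iff] at hz
        rcases hz with rfl | rfl
        · exact Or.inl hv
        · exact Or.inr hcH
    constructor
    · have hinj : Function.Injective (fun v : V => s(v, c)) := fun a b hab =>
        Sym2.congr_left.mp hab
      rw [hZ, Set.ncard_image_of_injective _ hinj, hMHeq, Set.ncard_singleton]
      omega
    · intro v₀ h₀ hv₀ hh₀ hadj₀
      obtain ⟨h, hhMH, hadjh⟩ := hdomV v₀ hv₀
      have hhc : h = c := by rw [hMHeq] at hhMH; exact hhMH
      obtain ⟨v, hvMV, hadjv⟩ := hdomH h₀ hh₀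
      refine ⟨v, c, hvMV, hcH, hadjc v hvMV, ?_⟩
      by_cases h1 : v = v₀
      · exact Or.inl h1
      by_cases h2 : c = h₀
      · exact Or.inr (Or.inl h2)
      exact Or.inr (Or.inr ⟨h1, h2, hadjc v hvMV, hadjv, (hhc ▸ hadjh : G.Adj c v₀).symm, hadj₀⟩)
end

section
/- Let D be a rectilinear domain (a simply connected closed region of the plane bounded by an orthogonal polygon) and let p₁, p₂ ∈ D. If there exists an axis-aligned rectangle R ⊆ D containing both p₁ and p₂, and p₁ lies in the interior of a pixel v₁ ∩ h₁ while p₂ lies in the interior of a pixel v₂ ∩ h₂ (where v₁,v₂ are vertical slices and h₁,h₂ horizontal slices of D with {v₁,h₁} and {v₂,h₂} disjoint), then int(v₂) ∩ int(h₁) ≠ ∅ and int(v₁) ∩ int(h₂) ≠ ∅. -/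
/-- `v` is a vertical slice of the rectilinear domain `D`: a nondegenerate
axis-aligned closed rectangle contained in `D` whose top and bottom sides lie on
the boundary of `D`. -/
def IsVSlice (D v : Set (ℝ × ℝ)) : Prop :=
  ∃ a b c d : ℝ, a < b ∧ c < d ∧ v = Set.Icc a b ×ˢ Set.Icc c d ∧ v ⊆ D ∧
    (Set.Icc a b ×ˢ ({c} : Set ℝ)) ⊆ frontier D ∧
    (Set.Icc a b ×ˢ ({d} : Set ℝ)) ⊆ frontier D

/-- `h` is a horizontal slice of the rectilinear domain `D`: a nondegenerate
axis-aligned closed rectangle contained in `D` whose left and right sides lie on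
the boundary of `D`. -/
def IsHSlice (D h : Set (ℝ × ℝ)) : Prop :=
  ∃ a b c d : ℝ, a < b ∧ c < d ∧ h = Set.Icc a b ×ˢ Set.Icc c d ∧ h ⊆ D ∧
    (({a} : Set ℝ) ×ˢ Set.Icc c d) ⊆ frontier D ∧
    (({b} : Set ℝ) ×ˢ Set.Icc c d) ⊆ frontier D

private lemma mid_mem {a b a' b' x : ℝ} (h1 : x ∈ Set.Ioo a b) (h2 : x ∈ Set.Icc a' b')
    (h3 : a' < b') : ∃ y, y ∈ Set.Ioo a b ∧ y ∈ Set.Ioo a' b' := by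
  have hmm : max a a' < min b b' :=
    max_lt (lt_min (h1.1.trans h1.2) (h1.1.trans_le h2.2))
      (lt_min (h2.1.trans_lt h1.2) h3)
  have h5 : max a a' < (max a a' + min b b') / 2 := by linarith
  have h6 : (max a a' + min b b') / 2 < min b b' := by linarith
  exact ⟨_, ⟨lt_of_le_of_lt (le_max_left _ _) h5, lt_of_lt_of_le h6 (min_le_left _ _)⟩,
    ⟨lt_of_le_of_lt (le_max_right _ _) h5, lt_of_lt_of_le h6 (min_le_right _ _)⟩⟩

/-- A horizontal frontier edge cannot cross the interior of a rectangle inside `D`. -/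
private lemma aux_h (D : Set (ℝ × ℝ)) {a b c d a' b' t x₀ : ℝ}
    (hab : a < b) (hRD : Set.Icc a b ×ˢ Set.Icc c d ⊆ D)
    (hedge : Set.Icc a' b' ×ˢ ({t} : Set ℝ) ⊆ frontier D)
    (hx₀ : x₀ ∈ Set.Icc a b) (hx₀' : x₀ ∈ Set.Ioo a' b') (ht : t ∈ Set.Ioo c d) : False := by
  obtain ⟨x, hx1, hx2⟩ := mid_mem hx₀' hx₀ hab
  have hint : (x, t) ∈ interior D := by
    apply interior_mono hRD
    rw [interior_prod_eq, interior_Icc, interior_Icc]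
    exact ⟨hx2, ht⟩
  have hfr : (x, t) ∈ frontier D := hedge ⟨⟨hx1.1.le, hx1.2.le⟩, rfl⟩
  exact hfr.2 hint

/-- A vertical frontier edge cannot cross the interior of a rectangle inside `D`. -/
private lemma aux_v (D : Set (ℝ × ℝ)) {a b c d a' b' t y₀ : ℝ}
    (hcd : c < d) (hRD : Set.Icc a b ×ˢ Set.Icc c d ⊆ D)
    (hedge : ({t} : Set ℝ) ×ˢ Set.Icc a' b' ⊆ frontier D)
    (hy₀ : y₀ ∈ Set.Icc c d) (hy₀' : y₀ ∈ Set.Ioo a' b') (ht : t ∈ Set.Ioo a b) : False := by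
  obtain ⟨y, hy1, hy2⟩ := mid_mem hy₀' hy₀ hcd
  have hint : (t, y) ∈ interior D := by
    apply interior_mono hRD
    rw [interior_prod_eq, interior_Icc, interior_Icc]
    exact ⟨ht, hy2⟩
  have hfr : (t, y) ∈ frontier D := hedge ⟨rfl, ⟨hy1.1.le, hy1.2.le⟩⟩
  exact hfr.2 hint

/-- If a nondegenerate axis-aligned rectangle `R ⊆ D` contains a point `p₁` of the
interior of the pixel `v₁ ∩ h₁` and a point `p₂` of the interior of the disjoint
pixel `v₂ ∩ h₂`, then `int(v₂) ∩ int(h₁) ≠ ∅` and `int(v₁) ∩ int(h₂) ≠ ∅`. -/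
theorem rectangle_forces_cross_intersections (D : Set (ℝ × ℝ))
    (hDcompact : IsCompact D) (hDconn : IsPreconnected D)
    [SimplyConnectedSpace D]
    (v₁ v₂ h₁ h₂ : Set (ℝ × ℝ))
    (hv₁ : IsVSlice D v₁) (hv₂ : IsVSlice D v₂)
    (hh₁ : IsHSlice D h₁) (hh₂ : IsHSlice D h₂)
    (hvne : v₁ ≠ v₂) (hhne : h₁ ≠ h₂)
    (p₁ p₂ : ℝ × ℝ)
    (hp₁ : p₁ ∈ interior (v₁ ∩ h₁)) (hp₂ : p₂ ∈ interior (v₂ ∩ h₂))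
    (R : Set (ℝ × ℝ))
    (hR : ∃ a b c d : ℝ, a < b ∧ c < d ∧ R = Set.Icc a b ×ˢ Set.Icc c d)
    (hRD : R ⊆ D) (hp₁R : p₁ ∈ R) (hp₂R : p₂ ∈ R) :
    (interior v₂ ∩ interior h₁).Nonempty ∧
    (interior v₁ ∩ interior h₂).Nonempty := by
  obtain ⟨a, b, c, d, hab, hcd, rfl⟩ := hR
  obtain ⟨a₁, b₁, c₁, d₁, hab₁, hcd₁, rfl, hv₁D, hv₁bot, hv₁top⟩ := hv₁
  obtain ⟨a₂, b₂, c₂, d₂, hab₂, hcd₂, rfl, hv₂D, hv₂bot, hv₂top⟩ := hv₂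
  obtain ⟨e₁, f₁, g₁, k₁, hef₁, hgk₁, rfl, hh₁D, hh₁l, hh₁r⟩ := hh₁
  obtain ⟨e₂, f₂, g₂, k₂, hef₂, hgk₂, rfl, hh₂D, hh₂l, hh₂r⟩ := hh₂
  have hp₁v : p₁ ∈ Set.Ioo a₁ b₁ ×ˢ Set.Ioo c₁ d₁ := by
    have := interior_mono Set.inter_subset_left hp₁
    rwa [interior_prod_eq, interior_Icc, interior_Icc] at this
  have hp₁h : p₁ ∈ Set.Ioo e₁ f₁ ×ˢ Set.Ioo g₁ k₁ := by
    have := interior_mono Set.inter_subset_right hp₁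
    rwa [interior_prod_eq, interior_Icc, interior_Icc] at this
  have hp₂v : p₂ ∈ Set.Ioo a₂ b₂ ×ˢ Set.Ioo c₂ d₂ := by
    have := interior_mono Set.inter_subset_left hp₂
    rwa [interior_prod_eq, interior_Icc, interior_Icc] at this
  have hp₂h : p₂ ∈ Set.Ioo e₂ f₂ ×ˢ Set.Ioo g₂ k₂ := by
    have := interior_mono Set.inter_subset_right hp₂
    rwa [interior_prod_eq, interior_Icc, interior_Icc] at this
  -- vertical position of p₁ relative to v₂
  have hc₂ : c₂ ≤ p₁.2 := by
    by_contra h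
    push_neg at h
    exact aux_h D hab hRD hv₂bot hp₂R.1 hp₂v.1
      ⟨hp₁R.2.1.trans_lt h, hp₂v.2.1.trans_le hp₂R.2.2⟩
  have hd₂ : p₁.2 ≤ d₂ := by
    by_contra h
    push_neg at h
    exact aux_h D hab hRD hv₂top hp₂R.1 hp₂v.1
      ⟨hp₂R.2.1.trans_lt hp₂v.2.2, h.trans_le hp₁R.2.2⟩
  -- vertical position of p₂ relative to v₁
  have hc₁ : c₁ ≤ p₂.2 := by
    by_contra h
    push_neg at h
    exact aux_h D hab hRD hv₁bot hp₁R.1 hp₁v.1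
      ⟨hp₂R.2.1.trans_lt h, hp₁v.2.1.trans_le hp₁R.2.2⟩
  have hd₁ : p₂.2 ≤ d₁ := by
    by_contra h
    push_neg at h
    exact aux_h D hab hRD hv₁top hp₁R.1 hp₁v.1
      ⟨hp₁R.2.1.trans_lt hp₁v.2.2, h.trans_le hp₂R.2.2⟩
  -- horizontal position of p₂ relative to h₁
  have he₁ : e₁ ≤ p₂.1 := by
    by_contra h
    push_neg at h
    exact aux_v D hcd hRD hh₁l hp₁R.2 hp₁h.2
      ⟨hp₂R.1.1.trans_lt h, hp₁h.1.1.trans_le hp₁R.1.2⟩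
  have hf₁ : p₂.1 ≤ f₁ := by
    by_contra h
    push_neg at h
    exact aux_v D hcd hRD hh₁r hp₁R.2 hp₁h.2
      ⟨hp₁R.1.1.trans_lt hp₁h.1.2, h.trans_le hp₂R.1.2⟩
  -- horizontal position of p₁ relative to h₂
  have he₂ : e₂ ≤ p₁.1 := by
    by_contra h
    push_neg at h
    exact aux_v D hcd hRD hh₂l hp₂R.2 hp₂h.2
      ⟨hp₁R.1.1.trans_lt h, hp₂h.1.1.trans_le hp₂R.1.2⟩
  have hf₂ : p₁.1 ≤ f₂ := by
    by_contra h
    push_neg at h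
    exact aux_v D hcd hRD hh₂r hp₂R.2 hp₂h.2
      ⟨hp₂R.1.1.trans_lt hp₂h.1.2, h.trans_le hp₁R.1.2⟩
  simp only [interior_prod_eq, interior_Icc]
  constructor
  · obtain ⟨x, hx1, hx2⟩ := mid_mem hp₂v.1 ⟨he₁, hf₁⟩ hef₁
    obtain ⟨y, hy1, hy2⟩ := mid_mem hp₁h.2 ⟨hc₂, hd₂⟩ hcd₂
    exact ⟨(x, y), ⟨hx1, hy2⟩, ⟨hx2, hy1⟩⟩
  · obtain ⟨x, hx1, hx2⟩ := mid_mem hp₁v.1 ⟨he₂, hf₂⟩ hef₂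
    obtain ⟨y, hy1, hy2⟩ := mid_mem hp₂h.2 ⟨hc₁, hd₁⟩ hcd₁
    exact ⟨(x, y), ⟨hx1, hy2⟩, ⟨hx2, hy1⟩⟩
end

section
/- Let D be a simply connected rectilinear domain, h₁, h₂ horizontal slices and v₁, v₂ vertical slices of D such that the interiors of each vᵢ and hⱼ pairwise intersect (so {v₁,h₁,v₂,h₂} induces a 4-cycle in the pixelation graph). Then the convex hull of the union of the four pixels vᵢ ∩ hⱼ is an axis-aligned rectangle contained in D. -/
/-!
Each slice runs between two boundary points of `D`, and a boundary point cannot be interior to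
another slice; so where `vᵢ` and `hⱼ` cross, `hⱼ` spans the full width of `vᵢ` and `vᵢ` the full
height of `hⱼ`. Hence the pixels are `[aᵢ, bᵢ] × [gⱼ, kⱼ]`, their hull is the rectangle
`R = [min aᵢ, max bᵢ] × [min gⱼ, max kⱼ]`, and the four slices cover the boundary of `R`.

It remains to see that `R ⊆ D`. If a point `p` of `R` were missing from `D`, then `D` would contain
two paths from the left to the right side of `R` at the height of `p`: one over the top of `R` and
one under its bottom. As `D` is simply connected they are homotopic in `D ⊆ ℂ \ {p}`, so their lifts
through `exp` (after translating `p` to `0`) end at the same point. But the imaginary part of the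
lift runs from `π` to `0` along the upper path and from `π` to `2π` along the lower one.
-/

open Set Real unitInterval

theorem int_eq_zero_of_sin_nonneg {X : Type*} [TopologicalSpace X] [PreconnectedSpace X]
    {θ : X → ℝ} (hθ : Continuous θ) {a b : X} (ha : θ a = π) (hsin : ∀ x, 0 ≤ sin (θ x))
    {n : ℤ} (hb : θ b = n * (2 * π)) : n = 0 := by
  -- Between `π` and any other multiple of `2π` lies `-π/2` or `3π/2`, where `sin` is negative.
  have hneg : ∀ x, θ x ≠ π / 2 + π ∧ θ x ≠ -(π / 2) := fun x ↦ by
    constructor <;> intro h <;> have := hsin x <;>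
      simp only [h, sin_add_pi, sin_neg, sin_pi_div_two, Left.nonneg_neg_iff] at this <;>
      linarith
  by_contra hn
  rcases lt_or_gt_of_ne hn with hn | hn
  · have : (n : ℝ) ≤ -1 := by exact_mod_cast Int.le_sub_one_of_lt hn
    obtain ⟨x, hx⟩ := intermediate_value_univ b a hθ
      (show -(π / 2) ∈ Icc (θ b) (θ a) by constructor <;> nlinarith [pi_pos])
    exact (hneg x).2 hx
  · have : (1 : ℝ) ≤ n := by exact_mod_cast hn
    obtain ⟨x, hx⟩ := intermediate_value_univ a b hθ
      (show π / 2 + π ∈ Icc (θ a) (θ b) by constructor <;> nlinarith [pi_pos])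
    exact (hneg x).1 hx

theorem im_eq_int_mul_two_pi_of_exp {z : ℂ} (hre : 0 < (Complex.exp z).re)
    (him : (Complex.exp z).im = 0) : ∃ n : ℤ, z.im = n * (2 * π) := by
  obtain ⟨n, hn⟩ :=
    Complex.exp_eq_exp_iff_exists_int.1 (Complex.exp_log (Complex.exp_ne_zero z)).symm
  refine ⟨n, ?_⟩
  simpa [Complex.log_im, Complex.arg_eq_zero_iff.2 ⟨hre.le, him⟩] using congrArg Complex.im hn

noncomputable def logLift (γ : C(I, {z : ℂ // z ≠ 0})) : C(I, ℂ) :=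
  Complex.isCoveringMap_exp.liftPath γ (Complex.log (γ 0))
    (Subtype.ext (Complex.exp_log (γ 0).2).symm)

theorem exp_logLift (γ : C(I, {z : ℂ // z ≠ 0})) (t : I) :
    Complex.exp (logLift γ t) = γ t :=
  congrArg Subtype.val (congrFun (Complex.isCoveringMap_exp.liftPath_lifts ..) t)

theorem im_apply_eq_exp_mul_sin_logLift (γ : C(I, {z : ℂ // z ≠ 0})) (t : I) :
    (γ t : ℂ).im = Real.exp (logLift γ t).re * sin (logLift γ t).im := by
  rw [← exp_logLift, Complex.exp_im]

theorem continuous_logLift_im (γ : C(I, {z : ℂ // z ≠ 0})) :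
    Continuous fun t ↦ (logLift γ t).im :=
  Complex.continuous_im.comp (logLift γ).continuous

theorem logLift_zero_im {γ : C(I, {z : ℂ // z ≠ 0})} (h0 : (γ 0 : ℂ).re < 0 ∧ (γ 0 : ℂ).im = 0) :
    (logLift γ 0).im = π := by
  rw [logLift, Complex.isCoveringMap_exp.liftPath_zero, Complex.log_im, Complex.arg_eq_pi_iff.2 h0]

theorem exists_logLift_one_im {γ : C(I, {z : ℂ // z ≠ 0})}
    (h1 : 0 < (γ 1 : ℂ).re ∧ (γ 1 : ℂ).im = 0) : ∃ n : ℤ, (logLift γ 1).im = n * (2 * π) :=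
  im_eq_int_mul_two_pi_of_exp (exp_logLift γ 1 ▸ h1.1) (exp_logLift γ 1 ▸ h1.2)

theorem logLift_one_eq {γ₀ γ₁ : C(I, {z : ℂ // z ≠ 0})} (h : γ₀.HomotopicRel γ₁ {0, 1}) :
    logLift γ₀ 1 = logLift γ₁ 1 := by
  have h0 : γ₀ 0 = γ₁ 0 := by
    obtain ⟨H⟩ := h
    exact (H.eq_fst 0 (.inl rfl)).symm.trans (H.eq_snd 0 (.inl rfl))
  unfold logLift
  simp only [h0]
  exact Complex.isCoveringMap_exp.liftPath_apply_one_eq_of_homotopicRel h _ _ _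

section

variable {γ : C(I, {z : ℂ // z ≠ 0})} (h0 : (γ 0 : ℂ).re < 0 ∧ (γ 0 : ℂ).im = 0)
  (h1 : 0 < (γ 1 : ℂ).re ∧ (γ 1 : ℂ).im = 0)
include h0 h1

theorem logLift_one_im_of_im_nonneg (him : ∀ t, 0 ≤ (γ t : ℂ).im) : (logLift γ 1).im = 0 := by
  have hsin : ∀ t, 0 ≤ sin (logLift γ t).im := fun t ↦ by
    simpa [im_apply_eq_exp_mul_sin_logLift, mul_nonneg_iff_of_pos_left (exp_pos _)] using him t
  obtain ⟨n, hn⟩ := exists_logLift_one_im h1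
  rw [hn, int_eq_zero_of_sin_nonneg (continuous_logLift_im γ) (logLift_zero_im h0) hsin hn]
  simp

theorem logLift_one_im_of_im_nonpos (him : ∀ t, (γ t : ℂ).im ≤ 0) :
    (logLift γ 1).im = 2 * π := by
  have hsin : ∀ t, 0 ≤ sin (2 * π - (logLift γ t).im) := fun t ↦ by
    have := him t
    rw [im_apply_eq_exp_mul_sin_logLift, mul_nonpos_iff_pos_imp_nonpos] at this
    linarith [sin_two_pi_sub (logLift γ t).im, this.1 (exp_pos _)]
  obtain ⟨n, hn⟩ := exists_logLift_one_im h1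
  have := int_eq_zero_of_sin_nonneg (θ := fun t ↦ 2 * π - (logLift γ t).im)
    (continuous_const.sub (continuous_logLift_im γ)) (by rw [logLift_zero_im h0]; ring)
    hsin (n := 1 - n) (by rw [hn]; push_cast; ring)
  rw [hn, show n = 1 by omega]
  simp

end

theorem not_joinedIn_upper_and_lower {X : Type*} [TopologicalSpace X] [SimplyConnectedSpace X]
    {φ : X → ℂ} (hφ : Continuous φ) (hφ0 : ∀ x, φ x ≠ 0) {x y : X}
    (hx : (φ x).re < 0 ∧ (φ x).im = 0) (hy : 0 < (φ y).re ∧ (φ y).im = 0)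
    (hup : JoinedIn {z | 0 ≤ (φ z).im} x y) (hdown : JoinedIn {z | (φ z).im ≤ 0} x y) :
    False := by
  let ψ : C(X, {z : ℂ // z ≠ 0}) := ⟨fun z ↦ ⟨φ z, hφ0 z⟩, hφ.subtype_mk _⟩
  let γup := hup.somePath.map ψ.continuous
  let γdown := hdown.somePath.map ψ.continuous
  have hom : γup.Homotopic γdown := (SimplyConnectedSpace.paths_homotopic _ _).map ψ
  have hup' := logLift_one_im_of_im_nonneg (γ := γup.toContinuousMap) (by simpa [γup, ψ] using hx)
    (by simpa [γup, ψ] using hy) (fun t ↦ hup.somePath_mem t)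
  have hdown' := logLift_one_im_of_im_nonpos (γ := γdown.toContinuousMap)
    (by simpa [γdown, ψ] using hx) (by simpa [γdown, ψ] using hy) (fun t ↦ hdown.somePath_mem t)
  rw [logLift_one_eq (γ₀ := γup.toContinuousMap) hom, hdown'] at hup'
  linarith [pi_pos]

theorem JoinedIn.preimage_val {X : Type*} [TopologicalSpace X] {D F : Set X} {x y : X}
    (h : JoinedIn F x y) (hFD : F ⊆ D) :
    JoinedIn (Subtype.val ⁻¹' F : Set D) ⟨x, hFD h.source_mem⟩ ⟨y, hFD h.target_mem⟩ :=
  ⟨{ toFun := fun t ↦ ⟨h.somePath t, hFD (h.somePath_mem t)⟩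
     source' := by simp
     target' := by simp }, h.somePath_mem⟩

theorem joinedIn_of_sides {D : Set (ℝ × ℝ)} {a b c d y w : ℝ} (hv : {a, b} ×ˢ Icc c d ⊆ D)
    (hw : Icc a b ×ˢ {w} ⊆ D) (hab : a ≤ b) (hy : y ∈ Icc c d) (hwcd : w ∈ Icc c d) :
    JoinedIn (D ∩ {q | q.2 ∈ uIcc y w}) (a, y) (b, y) := by
  have hyw : uIcc y w ⊆ Icc c d := uIcc_subset_Icc hy hwcd
  refine (JoinedIn.of_segment_subset (y := (a, w)) ?_).trans
    ((JoinedIn.of_segment_subset (y := (b, w)) ?_).trans (JoinedIn.of_segment_subset ?_))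
  · rw [← Prod.image_mk_segment_right, segment_eq_uIcc]
    rintro _ ⟨u, hu, rfl⟩
    exact ⟨hv ⟨by simp, hyw hu⟩, hu⟩
  · rw [← Prod.image_mk_segment_left, segment_eq_uIcc, uIcc_of_le hab]
    rintro _ ⟨u, hu, rfl⟩
    exact ⟨hw ⟨hu, rfl⟩, right_mem_uIcc⟩
  · rw [← Prod.image_mk_segment_right, segment_eq_uIcc, uIcc_comm]
    rintro _ ⟨u, hu, rfl⟩
    exact ⟨hv ⟨by simp, hyw hu⟩, hu⟩

theorem Icc_prod_Icc_subset_of_sides {D : Set (ℝ × ℝ)} [SimplyConnectedSpace D] {a b c d : ℝ}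
    (hv : {a, b} ×ˢ Icc c d ⊆ D) (hh : Icc a b ×ˢ {c, d} ⊆ D) : Icc a b ×ˢ Icc c d ⊆ D := by
  rintro ⟨x, y⟩ ⟨hx, hy⟩
  by_contra hp
  have hax : a < x := hx.1.lt_of_ne (by rintro rfl; exact hp (hv ⟨by simp, hy⟩))
  have hxb : x < b := hx.2.lt_of_ne (by rintro rfl; exact hp (hv ⟨by simp, hy⟩))
  have hcy : c < y := hy.1.lt_of_ne (by rintro rfl; exact hp (hh ⟨hx, by simp⟩))
  have hyd : y < d := hy.2.lt_of_ne (by rintro rfl; exact hp (hh ⟨hx, by simp⟩))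
  let φ : D → ℂ := fun z ↦ Complex.equivRealProdCLM.symm ((z : ℝ × ℝ) - (x, y))
  have hφ0 : ∀ z, φ z ≠ 0 := fun z hz ↦ by
    rw [map_eq_zero_iff _ Complex.equivRealProdCLM.symm.injective, sub_eq_zero] at hz
    exact hp (hz ▸ z.2)
  have hφ : Continuous φ := by fun_prop
  have hab : a ≤ b := (hax.trans hxb).le
  have hup := (joinedIn_of_sides hv ((prod_mono_right (by simp)).trans hh) hab hy
    ⟨(hcy.trans hyd).le, le_rfl⟩).preimage_val inter_subset_left
  have hdown := (joinedIn_of_sides hv ((prod_mono_right (by simp)).trans hh) hab hy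
    ⟨le_rfl, (hcy.trans hyd).le⟩).preimage_val inter_subset_left
  refine not_joinedIn_upper_and_lower hφ hφ0 ?_ ?_ (hup.mono ?_) (hdown.mono ?_)
  · simpa [φ] using hax
  · simpa [φ] using hxb
  · intro z hz
    simp only [mem_preimage, mem_inter_iff, mem_ofPred_eq, uIcc_of_le hyd.le] at hz
    simpa [φ] using hz.2.1
  · intro z hz
    simp only [mem_preimage, mem_inter_iff, mem_ofPred_eq, uIcc_of_ge hcy.le] at hz
    simpa [φ] using hz.2.2

theorem convexHull_eq_Icc_of_isLeast_of_isGreatest {s : Set ℝ} {a b : ℝ} (ha : IsLeast s a)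
    (hb : IsGreatest s b) : convexHull ℝ s = Icc a b :=
  (convexHull_min (fun _ hx ↦ mem_Icc.2 ⟨ha.2 hx, hb.2 hx⟩) (convex_Icc a b)).antisymm <| by
    rw [← segment_eq_Icc (ha.2 hb.1)]
    exact segment_subset_convexHull ha.1 hb.1

theorem convexHull_Icc_union_Icc {a₁ b₁ a₂ b₂ : ℝ} (h₁ : a₁ ≤ b₁) (h₂ : a₂ ≤ b₂) :
    convexHull ℝ (Icc a₁ b₁ ∪ Icc a₂ b₂) = Icc (min a₁ a₂) (max b₁ b₂) :=
  convexHull_eq_Icc_of_isLeast_of_isGreatest ((isLeast_Icc h₁).union (isLeast_Icc h₂))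
    ((isGreatest_Icc h₁).union (isGreatest_Icc h₂))

theorem pair_min_max_subset_Icc_union_Icc {a₁ b₁ a₂ b₂ : ℝ} (h₁ : a₁ ≤ b₁) (h₂ : a₂ ≤ b₂) :
    {min a₁ a₂, max b₁ b₂} ⊆ Icc a₁ b₁ ∪ Icc a₂ b₂ :=
  insert_subset_iff.2 ⟨((isLeast_Icc h₁).union (isLeast_Icc h₂)).1,
    singleton_subset_iff.2 ((isGreatest_Icc h₁).union (isGreatest_Icc h₂)).1⟩

theorem convexHull_four_Icc_prod_Icc {a₁ b₁ a₂ b₂ c₁ d₁ c₂ d₂ : ℝ} (ha₁ : a₁ ≤ b₁)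
    (ha₂ : a₂ ≤ b₂) (hc₁ : c₁ ≤ d₁) (hc₂ : c₂ ≤ d₂) :
    convexHull ℝ (Icc a₁ b₁ ×ˢ Icc c₁ d₁ ∪ Icc a₁ b₁ ×ˢ Icc c₂ d₂ ∪ Icc a₂ b₂ ×ˢ Icc c₁ d₁ ∪
      Icc a₂ b₂ ×ˢ Icc c₂ d₂) = Icc (min a₁ a₂) (max b₁ b₂) ×ˢ Icc (min c₁ c₂) (max d₁ d₂) := by
  rw [union_assoc _ (Icc a₂ b₂ ×ˢ _), ← prod_union, ← prod_union, ← union_prod, convexHull_prod,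
    convexHull_Icc_union_Icc ha₁ ha₂, convexHull_Icc_union_Icc hc₁ hc₂]

theorem Icc_min_max_prod_subset_of_strips {D : Set (ℝ × ℝ)} [SimplyConnectedSpace D]
    {a₁ b₁ a₂ b₂ c₁ d₁ c₂ d₂ : ℝ} (ha₁ : a₁ ≤ b₁) (ha₂ : a₂ ≤ b₂) (hc₁ : c₁ ≤ d₁) (hc₂ : c₂ ≤ d₂)
    (hv₁ : Icc a₁ b₁ ×ˢ Icc (min c₁ c₂) (max d₁ d₂) ⊆ D)
    (hv₂ : Icc a₂ b₂ ×ˢ Icc (min c₁ c₂) (max d₁ d₂) ⊆ D)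
    (hh₁ : Icc (min a₁ a₂) (max b₁ b₂) ×ˢ Icc c₁ d₁ ⊆ D)
    (hh₂ : Icc (min a₁ a₂) (max b₁ b₂) ×ˢ Icc c₂ d₂ ⊆ D) :
    Icc (min a₁ a₂) (max b₁ b₂) ×ˢ Icc (min c₁ c₂) (max d₁ d₂) ⊆ D :=
  Icc_prod_Icc_subset_of_sides
    ((prod_mono_left (pair_min_max_subset_Icc_union_Icc ha₁ ha₂)).trans
      (union_prod ▸ union_subset hv₁ hv₂))
    ((prod_mono_right (pair_min_max_subset_Icc_union_Icc hc₁ hc₂)).trans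
      (prod_union ▸ union_subset hh₁ hh₂))

theorem Icc_prod_Icc_inter_Icc_prod_Icc {a b c d e f g k : ℝ} (hea : e ≤ a) (hbf : b ≤ f)
    (hcg : c ≤ g) (hkd : k ≤ d) :
    Icc a b ×ˢ Icc c d ∩ Icc e f ×ˢ Icc g k = Icc a b ×ˢ Icc g k := by
  rw [prod_inter_prod, inter_eq_left.2 (Icc_subset_Icc hea hbf),
    inter_eq_right.2 (Icc_subset_Icc hcg hkd)]

theorem notMem_of_prod_singleton_subset_frontier {X Y : Type*} [TopologicalSpace X]
    [TopologicalSpace Y] {D : Set (X × Y)} {s t : Set X} {u : Set Y} {c : Y}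
    (hs : s ×ˢ {c} ⊆ frontier D) (htu : t ×ˢ u ⊆ interior D) (hst : (s ∩ t).Nonempty) :
    c ∉ u := fun hc ↦ by
  obtain ⟨x, hxs, hxt⟩ := hst
  exact (hs (mk_mem_prod hxs rfl)).2 (htu (mk_mem_prod hxt hc))

theorem notMem_of_singleton_prod_subset_frontier {X Y : Type*} [TopologicalSpace X]
    [TopologicalSpace Y] {D : Set (X × Y)} {s t : Set Y} {u : Set X} {c : X}
    (hs : {c} ×ˢ s ⊆ frontier D) (htu : u ×ˢ t ⊆ interior D) (hst : (s ∩ t).Nonempty) :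
    c ∉ u := fun hc ↦ by
  obtain ⟨y, hys, hyt⟩ := hst
  exact (hs (mk_mem_prod rfl hys)).2 (htu (mk_mem_prod hc hyt))

theorem interior_Icc_prod_Icc (a b c d : ℝ) :
    interior (Icc a b ×ˢ Icc c d) = Ioo a b ×ˢ Ioo c d := by
  rw [interior_prod_eq, interior_Icc, interior_Icc]

theorem bounds_of_slices_cross {D : Set (ℝ × ℝ)} {a b c d e f g k : ℝ}
    (hbot : Icc a b ×ˢ {c} ⊆ frontier D) (htop : Icc a b ×ˢ {d} ⊆ frontier D)
    (hleft : {e} ×ˢ Icc g k ⊆ frontier D) (hright : {f} ×ˢ Icc g k ⊆ frontier D)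
    (hvD : Icc a b ×ˢ Icc c d ⊆ D) (hhD : Icc e f ×ˢ Icc g k ⊆ D)
    (hmeet : (interior (Icc a b ×ˢ Icc c d) ∩ interior (Icc e f ×ˢ Icc g k)).Nonempty) :
    e ≤ a ∧ b ≤ f ∧ c ≤ g ∧ k ≤ d := by
  rw [interior_Icc_prod_Icc, interior_Icc_prod_Icc] at hmeet
  obtain ⟨⟨x, y⟩, ⟨hxab, hycd⟩, hxef, hygk⟩ := hmeet
  have hv := interior_Icc_prod_Icc a b c d ▸ interior_mono hvD
  have hh := interior_Icc_prod_Icc e f g k ▸ interior_mono hhD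
  have hy : (Icc g k ∩ Ioo c d).Nonempty := ⟨y, Ioo_subset_Icc_self hygk, hycd⟩
  have hx : (Icc a b ∩ Ioo e f).Nonempty := ⟨x, Ioo_subset_Icc_self hxab, hxef⟩
  have he := notMem_of_singleton_prod_subset_frontier hleft hv hy
  have hf := notMem_of_singleton_prod_subset_frontier hright hv hy
  have hc := notMem_of_prod_singleton_subset_frontier hbot hh hx
  have hd := notMem_of_prod_singleton_subset_frontier htop hh hx
  exact ⟨not_lt.1 fun h ↦ he ⟨h, hxef.1.trans hxab.2⟩,
    not_lt.1 fun h ↦ hf ⟨hxab.1.trans hxef.2, h⟩,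
    not_lt.1 fun h ↦ hc ⟨h, hycd.1.trans hygk.2⟩,
    not_lt.1 fun h ↦ hd ⟨hygk.1.trans hycd.2, h⟩⟩

theorem four_cycle_hull_is_rectangle_general (D : Set (ℝ × ℝ))
    [SimplyConnectedSpace D]
    (v₁ v₂ h₁ h₂ : Set (ℝ × ℝ))
    (hv₁ : IsVSlice D v₁) (hv₂ : IsVSlice D v₂)
    (hh₁ : IsHSlice D h₁) (hh₂ : IsHSlice D h₂)
    (h11 : (interior v₁ ∩ interior h₁).Nonempty)
    (h12 : (interior v₁ ∩ interior h₂).Nonempty)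
    (h21 : (interior v₂ ∩ interior h₁).Nonempty)
    (h22 : (interior v₂ ∩ interior h₂).Nonempty) :
    convexHull ℝ ((v₁ ∩ h₁) ∪ (v₁ ∩ h₂) ∪ (v₂ ∩ h₁) ∪ (v₂ ∩ h₂)) ⊆ D ∧
    ∃ a b c d : ℝ, a ≤ b ∧ c ≤ d ∧
      convexHull ℝ ((v₁ ∩ h₁) ∪ (v₁ ∩ h₂) ∪ (v₂ ∩ h₁) ∪ (v₂ ∩ h₂))
        = Set.Icc a b ×ˢ Set.Icc c d := by
  obtain ⟨a₁, b₁, c₁, d₁, hab₁, -, rfl, hv₁D, hv₁b, hv₁t⟩ := hv₁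
  obtain ⟨a₂, b₂, c₂, d₂, hab₂, -, rfl, hv₂D, hv₂b, hv₂t⟩ := hv₂
  obtain ⟨e₁, f₁, g₁, k₁, -, hgk₁, rfl, hh₁D, hh₁l, hh₁r⟩ := hh₁
  obtain ⟨e₂, f₂, g₂, k₂, -, hgk₂, rfl, hh₂D, hh₂l, hh₂r⟩ := hh₂
  obtain ⟨he₁₁, hf₁₁, hc₁₁, hk₁₁⟩ := bounds_of_slices_cross hv₁b hv₁t hh₁l hh₁r hv₁D hh₁D h11
  obtain ⟨he₂₁, hf₂₁, hc₁₂, hk₁₂⟩ := bounds_of_slices_cross hv₁b hv₁t hh₂l hh₂r hv₁D hh₂D h12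
  obtain ⟨he₁₂, hf₁₂, hc₂₁, hk₂₁⟩ := bounds_of_slices_cross hv₂b hv₂t hh₁l hh₁r hv₂D hh₁D h21
  obtain ⟨he₂₂, hf₂₂, hc₂₂, hk₂₂⟩ := bounds_of_slices_cross hv₂b hv₂t hh₂l hh₂r hv₂D hh₂D h22
  rw [Icc_prod_Icc_inter_Icc_prod_Icc he₁₁ hf₁₁ hc₁₁ hk₁₁,
    Icc_prod_Icc_inter_Icc_prod_Icc he₂₁ hf₂₁ hc₁₂ hk₁₂,
    Icc_prod_Icc_inter_Icc_prod_Icc he₁₂ hf₁₂ hc₂₁ hk₂₁,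
    Icc_prod_Icc_inter_Icc_prod_Icc he₂₂ hf₂₂ hc₂₂ hk₂₂,
    convexHull_four_Icc_prod_Icc hab₁.le hab₂.le hgk₁.le hgk₂.le]
  refine ⟨Icc_min_max_prod_subset_of_strips hab₁.le hab₂.le hgk₁.le hgk₂.le ?_ ?_ ?_ ?_,
    _, _, _, _, (min_le_left _ _).trans (hab₁.le.trans (le_max_left _ _)),
    (min_le_left _ _).trans (hgk₁.le.trans (le_max_left _ _)), rfl⟩
  · exact (prod_mono_right (Icc_subset_Icc (le_min hc₁₁ hc₁₂) (max_le hk₁₁ hk₁₂))).trans hv₁D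
  · exact (prod_mono_right (Icc_subset_Icc (le_min hc₂₁ hc₂₂) (max_le hk₂₁ hk₂₂))).trans hv₂D
  · exact (prod_mono_left (Icc_subset_Icc (le_min he₁₁ he₁₂) (max_le hf₁₁ hf₁₂))).trans hh₁D
  · exact (prod_mono_left (Icc_subset_Icc (le_min he₂₁ he₂₂) (max_le hf₂₁ hf₂₂))).trans hh₂D

/-- If the interiors of each vertical slice `vᵢ` and horizontal slice `hⱼ`
pairwise intersect (a 4-cycle in the pixelation graph of the simply connected
domain `D`), then the convex hull of the union of the four pixels `vᵢ ∩ hⱼ`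
is an axis-aligned rectangle contained in `D`. -/
theorem four_cycle_hull_is_rectangle (D : Set (ℝ × ℝ))
    (hDcompact : IsCompact D) [SimplyConnectedSpace D]
    (v₁ v₂ h₁ h₂ : Set (ℝ × ℝ))
    (hv₁ : IsVSlice D v₁) (hv₂ : IsVSlice D v₂)
    (hh₁ : IsHSlice D h₁) (hh₂ : IsHSlice D h₂)
    (h11 : (interior v₁ ∩ interior h₁).Nonempty)
    (h12 : (interior v₁ ∩ interior h₂).Nonempty)
    (h21 : (interior v₂ ∩ interior h₁).Nonempty)
    (h22 : (interior v₂ ∩ interior h₂).Nonempty) :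
    convexHull ℝ ((v₁ ∩ h₁) ∪ (v₁ ∩ h₂) ∪ (v₂ ∩ h₁) ∪ (v₂ ∩ h₂)) ⊆ D ∧
    ∃ a b c d : ℝ, a ≤ b ∧ c ≤ d ∧
      convexHull ℝ ((v₁ ∩ h₁) ∪ (v₁ ∩ h₂) ∪ (v₂ ∩ h₁) ∪ (v₂ ∩ h₂))
        = Set.Icc a b ×ˢ Set.Icc c d :=
  four_cycle_hull_is_rectangle_general D v₁ v₂ h₁ h₂ hv₁ hv₂ hh₁ hh₂ h11 h12 h21 h22
end

section
/- Let G be a connected chordal bipartite graph with bipartition classes S_V and S_H, and let m_V, m_H be the minimum sizes of sets M_V ⊆ S_V dominating S_H and M_H ⊆ S_H dominating S_V, respectively. If m_V = 1 or m_H = 1, then there exists a set Z of edges of G with |Z| ≤ m_V + m_H − 1 such that every edge of G has r-vision from some element of Z. -/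
/-- In a connected chordal bipartite graph, if `m_V = 1` or `m_H = 1` (the minimum
sizes of subsets of one class dominating the other), then there is a set `Z` of at
most `m_V + m_H − 1` edges r-covering every edge of `G`. -/
theorem star_case_point_guards {V : Type*} [Fintype V] [DecidableEq V]
    (G : SimpleGraph V) (SV SH : Set V)
    (hpart : ∀ v, (v ∈ SV ∧ v ∉ SH) ∨ (v ∈ SH ∧ v ∉ SV))
    (hbip : ∀ x y, G.Adj x y → (x ∈ SV ∧ y ∈ SH) ∨ (x ∈ SH ∧ y ∈ SV))
    (hconn : G.Connected) (hchord : ChordCond G)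
    (mV mH : ℕ)
    (hmV : mV = sInf {n : ℕ | ∃ M : Finset V, ↑M ⊆ SV ∧
      (∀ h ∈ SH, ∃ v ∈ M, G.Adj v h) ∧ M.card = n})
    (hmH : mH = sInf {n : ℕ | ∃ M : Finset V, ↑M ⊆ SH ∧
      (∀ v ∈ SV, ∃ h ∈ M, G.Adj h v) ∧ M.card = n})
    (hone : mV = 1 ∨ mH = 1) :
    ∃ Z : Finset (V × V),
      (∀ p ∈ Z, p.1 ∈ SV ∧ p.2 ∈ SH ∧ G.Adj p.1 p.2) ∧
      Z.card ≤ mV + mH - 1 ∧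
      ∀ v₀ h₀, v₀ ∈ SV → h₀ ∈ SH → G.Adj v₀ h₀ →
        ∃ p ∈ Z, RVision G p.1 p.2 v₀ h₀ := by

  classical
  rcases hone with h1 | h1
  · -- mV = 1 : there is a vertex vstar ∈ SV dominating SH
    have hne : {n : ℕ | ∃ M : Finset V, ↑M ⊆ SV ∧
        (∀ h ∈ SH, ∃ v ∈ M, G.Adj v h) ∧ M.card = n}.Nonempty := by
      by_contra hc
      rw [Set.not_nonempty_iff_eq_empty] at hc
      rw [hc, Nat.sInf_empty] at hmV
      omega
    obtain ⟨M, hMsub, hMdom, hMcard⟩ := Nat.sInf_mem hne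
    rw [← hmV, h1] at hMcard
    obtain ⟨vstar, hMeq⟩ := Finset.card_eq_one.mp hMcard
    subst hMeq
    have hvS : vstar ∈ SV := hMsub (Finset.mem_singleton_self vstar)
    have hvdom : ∀ h ∈ SH, G.Adj vstar h := by
      intro h hh
      obtain ⟨v, hv, hadj⟩ := hMdom h hh
      rw [Finset.mem_singleton] at hv
      subst hv
      exact hadj
    have hSHne : SH.Nonempty := by
      by_contra hc
      rw [Set.not_nonempty_iff_eq_empty] at hc
      have h0 : (0 : ℕ) ∈ {n : ℕ | ∃ M : Finset V, ↑M ⊆ SV ∧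
          (∀ h ∈ SH, ∃ v ∈ M, G.Adj v h) ∧ M.card = n} :=
        ⟨∅, by simp, by simp [hc], rfl⟩
      have := Nat.sInf_le h0
      omega
    -- SH itself dominates SV, so the mH set is nonempty
    have hfin : SH.Finite := Set.toFinite SH
    have hneH : {n : ℕ | ∃ M : Finset V, ↑M ⊆ SH ∧
        (∀ v ∈ SV, ∃ h ∈ M, G.Adj h v) ∧ M.card = n}.Nonempty := by
      refine ⟨hfin.toFinset.card, hfin.toFinset, by rw [Set.Finite.coe_toFinset], ?_, rfl⟩
      intro v hv
      by_cases hvv : v = vstar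
      · obtain ⟨h, hh⟩ := hSHne
        exact ⟨h, hfin.mem_toFinset.mpr hh, by subst hvv; exact (hvdom h hh).symm⟩
      · obtain ⟨p⟩ := hconn v vstar
        cases p with
        | nil => exact absurd rfl hvv
        | @cons _ y _ hadj q =>
          have hy : y ∈ SH := by
            rcases hbip v y hadj with ⟨_, hy⟩ | ⟨hvH, _⟩
            · exact hy
            · rcases hpart v with ⟨_, hvnH⟩ | ⟨_, hvnV⟩
              · exact absurd hvH hvnH
              · exact absurd hv hvnV
          exact ⟨y, hfin.mem_toFinset.mpr hy, hadj.symm⟩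
    obtain ⟨MH, hMHsub, hMHdom, hMHcard⟩ := Nat.sInf_mem hneH
    rw [← hmH] at hMHcard
    refine ⟨MH.image (fun h => (vstar, h)), ?_, ?_, ?_⟩
    · intro p hp
      obtain ⟨h, hhM, rfl⟩ := Finset.mem_image.mp hp
      exact ⟨hvS, hMHsub hhM, hvdom h (hMHsub hhM)⟩
    · have := Finset.card_image_le (s := MH) (f := fun h => (vstar, h))
      omega
    · intro v₀ h₀ hv₀ hh₀ hadj
      obtain ⟨h, hhM, hadjh⟩ := hMHdom v₀ hv₀
      refine ⟨(vstar, h), Finset.mem_image_of_mem _ hhM, ?_⟩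
      by_cases hc1 : vstar = v₀
      · exact Or.inl hc1
      by_cases hc2 : h = h₀
      · exact Or.inr (Or.inl hc2)
      exact Or.inr (Or.inr ⟨hc1, hc2, hvdom h (hMHsub hhM), hvdom h₀ hh₀,
        hadjh.symm, hadj⟩)
  · -- mH = 1 : there is a vertex hstar ∈ SH dominating SV
    have hne : {n : ℕ | ∃ M : Finset V, ↑M ⊆ SH ∧
        (∀ v ∈ SV, ∃ h ∈ M, G.Adj h v) ∧ M.card = n}.Nonempty := by
      by_contra hc
      rw [Set.not_nonempty_iff_eq_empty] at hc
      rw [hc, Nat.sInf_empty] at hmH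
      omega
    obtain ⟨M, hMsub, hMdom, hMcard⟩ := Nat.sInf_mem hne
    rw [← hmH, h1] at hMcard
    obtain ⟨hstar, hMeq⟩ := Finset.card_eq_one.mp hMcard
    subst hMeq
    have hhS : hstar ∈ SH := hMsub (Finset.mem_singleton_self hstar)
    have hhdom : ∀ v ∈ SV, G.Adj hstar v := by
      intro v hv
      obtain ⟨h, hh, hadj⟩ := hMdom v hv
      rw [Finset.mem_singleton] at hh
      subst hh
      exact hadj
    have hSVne : SV.Nonempty := by
      by_contra hc
      rw [Set.not_nonempty_iff_eq_empty] at hc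
      have h0 : (0 : ℕ) ∈ {n : ℕ | ∃ M : Finset V, ↑M ⊆ SH ∧
          (∀ v ∈ SV, ∃ h ∈ M, G.Adj h v) ∧ M.card = n} :=
        ⟨∅, by simp, by simp [hc], rfl⟩
      have := Nat.sInf_le h0
      omega
    have hfin : SV.Finite := Set.toFinite SV
    have hneV : {n : ℕ | ∃ M : Finset V, ↑M ⊆ SV ∧
        (∀ h ∈ SH, ∃ v ∈ M, G.Adj v h) ∧ M.card = n}.Nonempty := by
      refine ⟨hfin.toFinset.card, hfin.toFinset, by rw [Set.Finite.coe_toFinset], ?_, rfl⟩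
      intro h hh
      by_cases hhv : h = hstar
      · obtain ⟨v, hv⟩ := hSVne
        exact ⟨v, hfin.mem_toFinset.mpr hv, by subst hhv; exact (hhdom v hv).symm⟩
      · obtain ⟨p⟩ := hconn h hstar
        cases p with
        | nil => exact absurd rfl hhv
        | @cons _ y _ hadj q =>
          have hy : y ∈ SV := by
            rcases hbip h y hadj with ⟨hhV, _⟩ | ⟨_, hy⟩
            · rcases hpart h with ⟨_, hna⟩ | ⟨_, hnb⟩
              · exact absurd hh hna
              · exact absurd hhV hnb
            · exact hy
          exact ⟨y, hfin.mem_toFinset.mpr hy, hadj.symm⟩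
    obtain ⟨MV, hMVsub, hMVdom, hMVcard⟩ := Nat.sInf_mem hneV
    rw [← hmV] at hMVcard
    refine ⟨MV.image (fun v => (v, hstar)), ?_, ?_, ?_⟩
    · intro p hp
      obtain ⟨v, hvM, rfl⟩ := Finset.mem_image.mp hp
      exact ⟨hMVsub hvM, hhS, (hhdom v (hMVsub hvM)).symm⟩
    · have := Finset.card_image_le (s := MV) (f := fun v => (v, hstar))
      omega
    · intro v₀ h₀ hv₀ hh₀ hadj
      obtain ⟨v, hvM, hadjv⟩ := hMVdom h₀ hh₀
      refine ⟨(v, hstar), Finset.mem_image_of_mem _ hvM, ?_⟩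
      by_cases hc1 : v = v₀
      · exact Or.inl hc1
      by_cases hc2 : hstar = h₀
      · exact Or.inr (Or.inl hc2)
      exact Or.inr (Or.inr ⟨hc1, hc2, (hhdom v (hMVsub hvM)).symm, hadjv,
        (hhdom v₀ hv₀).symm, hadj⟩)
end

section
/- Let G be a connected graph and let M be a subgraph of G whose connected components are M₁,...,M_t, such that the neighborhoods N_i := N_G(V(M_i)) ⊇ V(M_i) satisfy ⋃ᵢ N_i = V(G) and each induced subgraph G[N_i] is connected. Then the number of 'connecting' objects needed, counted as ∑_{i=2}^t q_i where q_i is the number of components of G[⋃_{k<i} N_k \ ⋃_{k≥i} N_k] to which N_i \ ⋃_{k>i} N_k is joined in G[⋃_{k≤i} N_k \ ⋃_{k>i} N_k], equals t − 1, provided all successive unions G[⋃_{k≤i} N_k \ ⋃_{k>i} N_k] are connected. -/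
/-- The number of connected components of the subgraph of `G` induced by `A`
that are joined by an edge of `G` to the set `B`. -/
noncomputable def qcount {V : Type*} (G : SimpleGraph V) (A B : Set V) : ℕ :=
  {c : (G.induce A).ConnectedComponent |
    ∃ u : A, (G.induce A).connectedComponentMk u = c ∧ ∃ b ∈ B, G.Adj ↑u b}.ncard

/-- If the induced graph on `A ∪ B` is connected, with `A`, `B` disjoint and
nonempty, then there is an edge of `G` from `A` to `B`. -/
lemma cross_edge {V : Type*} (G : SimpleGraph V) (A B : Set V)
    (hd : ∀ x ∈ A, x ∉ B)
    (hconn : (G.induce (A ∪ B)).Connected)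
    (ha : A.Nonempty) (hb : B.Nonempty) :
    ∃ a ∈ A, ∃ b ∈ B, G.Adj a b := by
  obtain ⟨a, haA⟩ := ha
  obtain ⟨b, hbB⟩ := hb
  obtain ⟨w⟩ := hconn.preconnected ⟨a, Or.inl haA⟩ ⟨b, Or.inr hbB⟩
  suffices H : ∀ (u v : ↥(A ∪ B)) (_ : (G.induce (A ∪ B)).Walk u v),
      ↑u ∈ A → ↑v ∈ B → ∃ a ∈ A, ∃ b ∈ B, G.Adj a b from H _ _ w haA hbB
  intro u v w
  induction w with
  | nil => exact fun hu hv => absurd hv (hd _ hu)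
  | @cons u x v h p ih =>
    intro hu hv
    by_cases hx : ↑x ∈ A
    · exact ih hx hv
    · exact ⟨↑u, hu, ↑x, x.2.resolve_left hx, h⟩

lemma qcount_eq_one {V : Type*} (G : SimpleGraph V) (A B : Set V)
    (hA : (G.induce A).Connected)
    (h : ∃ a ∈ A, ∃ b ∈ B, G.Adj a b) : qcount G A B = 1 := by
  obtain ⟨a, ha, b, hb, hab⟩ := h
  have hset : {c : (G.induce A).ConnectedComponent |
      ∃ u : A, (G.induce A).connectedComponentMk u = c ∧ ∃ b ∈ B, G.Adj ↑u b}
      = {(G.induce A).connectedComponentMk ⟨a, ha⟩} := by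
    ext c
    constructor
    · rintro ⟨u, rfl, -⟩
      exact SimpleGraph.ConnectedComponent.sound (hA.preconnected u ⟨a, ha⟩)
    · rintro rfl
      exact ⟨⟨a, ha⟩, rfl, b, hb, hab⟩
  rw [qcount, hset, Set.ncard_singleton]

/-- Gluing `t` connected pieces into a connected whole requires exactly `t − 1`
attachments: if `⋃_{k<t} N_k = V(G)`, each `G[N_i \ ⋃_{k>i} N_k]` is connected,
and each successive union `G[⋃_{k≤i} N_k \ ⋃_{k>i} N_k]` is connected, then
`∑_{i=1}^{t-1} q_i = t − 1`, where `q_i` is the number of components of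
`G[⋃_{k<i} N_k \ ⋃_{k≥i} N_k]` joined to `N_i \ ⋃_{k>i} N_k`. -/
theorem gluing_counting_identity {V : Type*} [Fintype V] [DecidableEq V]
    (G : SimpleGraph V) (hG : G.Connected)
    (t : ℕ) (ht : 1 ≤ t) (N : ℕ → Set V)
    (hcover : (⋃ k, ⋃ (_ : k < t), N k) = Set.univ)
    (hBconn : ∀ i < t,
      (G.induce ((N i) \ ⋃ k, ⋃ (_ : i < k ∧ k < t), N k)).Connected)
    (hUconn : ∀ i < t,
      (G.induce ((⋃ k, ⋃ (_ : k ≤ i), N k) \ ⋃ k, ⋃ (_ : i < k ∧ k < t), N k)).Connected) :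
    ∑ i ∈ Finset.Ico 1 t,
        qcount G
          ((⋃ k, ⋃ (_ : k < i), N k) \ ⋃ k, ⋃ (_ : i ≤ k ∧ k < t), N k)
          ((N i) \ ⋃ k, ⋃ (_ : i < k ∧ k < t), N k)
      = t - 1 := by
  have hq : ∀ i ∈ Finset.Ico 1 t,
      qcount G
        ((⋃ k, ⋃ (_ : k < i), N k) \ ⋃ k, ⋃ (_ : i ≤ k ∧ k < t), N k)
        ((N i) \ ⋃ k, ⋃ (_ : i < k ∧ k < t), N k) = 1 := by
    intro i hi
    rw [Finset.mem_Ico] at hi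
    obtain ⟨h1, h2⟩ := hi
    set A : Set V := (⋃ k, ⋃ (_ : k < i), N k) \ ⋃ k, ⋃ (_ : i ≤ k ∧ k < t), N k with hAdef
    set B : Set V := (N i) \ ⋃ k, ⋃ (_ : i < k ∧ k < t), N k with hBdef
    -- A is connected, via hUconn (i-1)
    have hAconn : (G.induce A).Connected := by
      have hc := hUconn (i - 1) (by omega)
      have hAeq : ((⋃ k, ⋃ (_ : k ≤ i - 1), N k) \ ⋃ k, ⋃ (_ : i - 1 < k ∧ k < t), N k) = A := by
        rw [hAdef]
        ext x
        simp only [Set.mem_diff, Set.mem_iUnion, exists_prop]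
        constructor <;> rintro ⟨⟨k, hk, hx⟩, hn⟩ <;>
          exact ⟨⟨k, by omega, hx⟩, fun ⟨j, hj, hxj⟩ => hn ⟨j, by omega, hxj⟩⟩
      rwa [hAeq] at hc
    -- A ∪ B is the set in hUconn i
    have hABeq : A ∪ B = (⋃ k, ⋃ (_ : k ≤ i), N k) \ ⋃ k, ⋃ (_ : i < k ∧ k < t), N k := by
      rw [hAdef, hBdef]
      ext x
      simp only [Set.mem_union, Set.mem_diff, Set.mem_iUnion, exists_prop]
      constructor
      · rintro (⟨⟨k, hk, hx⟩, hn⟩ | ⟨hx, hn⟩)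
        · exact ⟨⟨k, by omega, hx⟩, fun ⟨j, hj, hxj⟩ => hn ⟨j, ⟨by omega, hj.2⟩, hxj⟩⟩
        · exact ⟨⟨i, le_refl i, hx⟩, hn⟩
      · rintro ⟨⟨k, hk, hx⟩, hn⟩
        by_cases hxi : x ∈ N i
        · exact Or.inr ⟨hxi, hn⟩
        · refine Or.inl ⟨⟨k, ?_, hx⟩, ?_⟩
          · rcases eq_or_lt_of_le hk with rfl | hlt
            · exact absurd hx hxi
            · exact hlt
          · rintro ⟨j, ⟨hj1, hj2⟩, hxj⟩
            rcases eq_or_lt_of_le hj1 with rfl | hlt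
            · exact hxi hxj
            · exact hn ⟨j, ⟨hlt, hj2⟩, hxj⟩
    have hABconn : (G.induce (A ∪ B)).Connected := by
      rw [hABeq]; exact hUconn i h2
    -- disjointness
    have hd : ∀ x ∈ A, x ∉ B := by
      rintro x ⟨-, hn⟩ ⟨hxi, -⟩
      exact hn (Set.mem_iUnion.2 ⟨i, Set.mem_iUnion.2 ⟨⟨le_refl i, h2⟩, hxi⟩⟩)
    -- nonemptiness
    have hAne : A.Nonempty := by
      obtain ⟨⟨x, hx⟩⟩ := hAconn.nonempty
      exact ⟨x, hx⟩
    have hBne : B.Nonempty := by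
      obtain ⟨⟨x, hx⟩⟩ := (hBconn i h2).nonempty
      exact ⟨x, hx⟩
    exact qcount_eq_one G A B hAconn (cross_edge G A B hd hABconn hAne hBne)
  rw [Finset.sum_congr rfl hq, Finset.sum_const, smul_eq_mul, mul_one, Nat.card_Ico]
end
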